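/- Let k ≥ 1 and let φ be a Boolean function on V = {0,...,k}. If eul(φ) = 0, then φ ≃ ⊥, where ⊥ is the Boolean function with no satisfying valuation. -/

import Mathlib

open scoped Classical

/-- Flip the membership of variable `l` in valuation `ν`. -/
def flipV {k : ℕ} (ν : Finset (Fin (k + 1))) (l : Fin (k + 1)) : Finset (Fin (k + 1)) :=
  if l ∈ ν then ν.erase l else insert l ν

/-- The set of satisfying valuations of a Boolean function on `V = {0,...,k}`. -/
def satSet {k : ℕ} (φ : Finset (Fin (k + 1)) → Bool) : Finset (Finset (Fin (k + 1))) :=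
  Finset.univ.filter (fun ν => φ ν = true)

/-- The Euler characteristic of a Boolean function: `Σ_{ν ⊨ φ} (-1)^{|ν|}`. -/
def eul {k : ℕ} (φ : Finset (Fin (k + 1)) → Bool) : ℤ :=
  ∑ ν ∈ satSet φ, (-1 : ℤ) ^ ν.card

/-- `φ →+ φ'`: there are `ν, l` with `ν ∉ sat(φ)`, `ν^(l) ∉ sat(φ)` and
`sat(φ') = sat(φ) ∪ {ν, ν^(l)}`. -/
def StepPlus (k : ℕ) (φ φ' : Finset (Fin (k + 1)) → Bool) : Prop :=
  ∃ (ν : Finset (Fin (k + 1))) (l : Fin (k + 1)),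
    φ ν = false ∧ φ (flipV ν l) = false ∧
    ∀ μ, (φ' μ = true ↔ φ μ = true ∨ μ = ν ∨ μ = flipV ν l)

/-- `φ →− φ'`: remove two adjacent satisfying valuations. -/
def StepMinus (k : ℕ) (φ φ' : Finset (Fin (k + 1)) → Bool) : Prop :=
  StepPlus k φ' φ

/-- `φ →± φ'`. -/
def StepPM (k : ℕ) (φ φ' : Finset (Fin (k + 1)) → Bool) : Prop :=
  StepPlus k φ φ' ∨ StepMinus k φ φ'

/-- The relation `≃` (equivalently `→±*`): the reflexive transitive closure of `→±`. -/
def EquivPM (k : ℕ) (φ φ' : Finset (Fin (k + 1)) → Bool) : Prop :=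
  Relation.ReflTransGen (StepPM k) φ φ'

/-!
Each step `→±` adds or removes two valuations of opposite sign `(-1)^|ν|`, so `eul` is an
invariant of `≃`. A satisfying valuation can be moved two flips away onto an unsatisfying one by
one `→+` and one `→−` step, taken in the order dictated by whether the valuation in between is
satisfied; iterating this, any two satisfying valuations at odd Hamming distance can be removed
together. If `eul φ = 0` and `φ ≠ ⊥`, there are satisfying valuations of both signs, that is at
odd distance, and removing them lowers `|sat φ|` while keeping `eul = 0`.
-/

open scoped symmDiff
open Function

theorem Finset.card_symmDiff_add_two_mul_card_inter {α : Type*} [DecidableEq α] (s t : Finset α) :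
    (s ∆ t).card + 2 * (s ∩ t).card = s.card + t.card := by
  rw [symmDiff_eq_sup_sdiff_inf, Finset.sup_eq_union, Finset.inf_eq_inter,
    Finset.card_sdiff_of_subset Finset.inter_subset_union, ← Finset.card_union_add_card_inter]
  have := Finset.card_le_card (Finset.inter_subset_union (s := s) (t := t))
  omega

theorem Finset.neg_one_pow_card_symmDiff {α : Type*} [DecidableEq α] (s t : Finset α) :
    (-1 : ℤ) ^ (s ∆ t).card = (-1) ^ s.card * (-1) ^ t.card := by
  rw [← pow_add, ← Finset.card_symmDiff_add_two_mul_card_inter, pow_add, pow_mul]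
  simp

theorem Finset.odd_card_symmDiff_of_neg_one_pow_ne {α : Type*} [DecidableEq α] {s t : Finset α}
    (h : (-1 : ℤ) ^ s.card ≠ (-1) ^ t.card) : Odd (s ∆ t).card := by
  have hst := Finset.neg_one_pow_card_symmDiff s t
  rcases Nat.even_or_odd (s ∆ t).card with heven | hodd
  · rcases neg_one_pow_eq_or ℤ s.card with hs | hs <;>
      rcases neg_one_pow_eq_or ℤ t.card with ht | ht <;>
      simp_all [heven.neg_one_pow]
  · exact hodd

section Flip

variable {k : ℕ}

theorem flipV_eq_symmDiff (ν : Finset (Fin (k + 1))) (l : Fin (k + 1)) : flipV ν l = ν ∆ {l} := by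
  unfold flipV
  split_ifs with h
  · rw [symmDiff_of_ge (Finset.singleton_subset_iff.mpr h), Finset.sdiff_singleton_eq_erase]
  · rw [Finset.symmDiff_eq_union (Finset.disjoint_singleton_right.mpr h), Finset.union_comm,
      ← Finset.insert_eq]

theorem flipV_ne (ν : Finset (Fin (k + 1))) (l : Fin (k + 1)) : flipV ν l ≠ ν := by
  simp [flipV_eq_symmDiff, symmDiff_eq_left]

theorem neg_one_pow_card_flipV (ν : Finset (Fin (k + 1))) (l : Fin (k + 1)) :
    (-1 : ℤ) ^ (flipV ν l).card = -(-1) ^ ν.card := by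
  simp [flipV_eq_symmDiff, Finset.neg_one_pow_card_symmDiff]

theorem flipV_symmDiff_of_mem {ν μ : Finset (Fin (k + 1))} {l : Fin (k + 1)} (hl : l ∈ ν ∆ μ) :
    flipV ν l ∆ μ = (ν ∆ μ).erase l := by
  rw [flipV_eq_symmDiff, symmDiff_right_comm, symmDiff_of_ge (Finset.singleton_subset_iff.mpr hl),
    Finset.sdiff_singleton_eq_erase]

theorem flipV_flipV_ne (ν : Finset (Fin (k + 1))) {l l' : Fin (k + 1)} (h : l ≠ l') :
    flipV (flipV ν l) l' ≠ ν := by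
  simpa [flipV_eq_symmDiff, symmDiff_assoc, symmDiff_eq_left, symmDiff_eq_bot] using h

theorem exists_flipV_flipV_ne_card_symmDiff_add_two {ν μ : Finset (Fin (k + 1))} {l : Fin (k + 1)}
    (hl : l ∈ ν ∆ μ) (hμ : flipV ν l ≠ μ) :
    ∃ l', flipV (flipV ν l) l' ≠ ν ∧ (flipV (flipV ν l) l' ∆ μ).card + 2 = (ν ∆ μ).card := by
  obtain ⟨l', hl'⟩ : (flipV ν l ∆ μ).Nonempty :=
    Finset.nonempty_iff_ne_empty.mpr (mt symmDiff_eq_bot.mp hμ)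
  refine ⟨l', ?_, ?_⟩
  · rw [flipV_symmDiff_of_mem hl] at hl'
    exact flipV_flipV_ne ν (Finset.ne_of_mem_erase hl').symm
  · rw [flipV_symmDiff_of_mem hl', ← Finset.card_erase_add_one hl,
      ← flipV_symmDiff_of_mem hl, ← Finset.card_erase_add_one hl']

end Flip

section Moves

variable {k : ℕ} {φ : Finset (Fin (k + 1)) → Bool} {ν ν' : Finset (Fin (k + 1))} {l : Fin (k + 1)}

theorem EquivPM.trans {ψ χ : Finset (Fin (k + 1)) → Bool} (h₁ : EquivPM k φ ψ)
    (h₂ : EquivPM k ψ χ) : EquivPM k φ χ :=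
  Relation.ReflTransGen.trans h₁ h₂

theorem stepPlus_update (hν : φ ν = false) (hl : φ (flipV ν l) = false) :
    StepPlus k φ (update (update φ ν true) (flipV ν l) true) :=
  ⟨ν, l, hν, hl, fun μ => by simp only [update_apply]; split_ifs <;> simp_all⟩

theorem equivPM_add_pair (hl : flipV ν l = ν') (hν : φ ν = false) (hν' : φ ν' = false) :
    EquivPM k φ (update (update φ ν true) ν' true) := by
  subst hl
  exact .single (.inl (stepPlus_update hν hν'))

theorem equivPM_remove_pair (hl : flipV ν l = ν') (hν : φ ν = true) (hν' : φ ν' = true) :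
    EquivPM k φ (update (update φ ν false) ν' false) := by
  subst hl
  have hne := flipV_ne ν l
  set ψ := update (update φ ν false) (flipV ν l) false
  have hψ : update (update ψ ν true) (flipV ν l) true = φ := by
    funext μ
    simp only [ψ, update_apply]
    split_ifs <;> simp_all
  exact .single (.inr (hψ ▸ stepPlus_update (by simp [ψ, hne.symm]) (by simp [ψ])))

theorem equivPM_move {ν₁ ν₂ : Finset (Fin (k + 1))} {l' : Fin (k + 1)} (h₁ : flipV ν l = ν₁)
    (h₂ : flipV ν₁ l' = ν₂) (h₂ν : ν₂ ≠ ν) (hν : φ ν = true) (hν₂ : φ ν₂ = false) :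
    EquivPM k φ (update (update φ ν false) ν₂ true) := by
  have h₁ν : ν₁ ≠ ν := h₁ ▸ flipV_ne ν l
  have h₂₁ : ν₂ ≠ ν₁ := h₂ ▸ flipV_ne ν₁ l'
  cases hν₁ : φ ν₁
  · have hadd := equivPM_add_pair h₂ hν₁ hν₂
    have hrem := equivPM_remove_pair (φ := update (update φ ν₁ true) ν₂ true) h₁
      (by simp [h₁ν.symm, h₂ν.symm, hν]) (by simp [h₂₁.symm])
    have hφ' : update (update φ ν false) ν₂ true
        = update (update (update (update φ ν₁ true) ν₂ true) ν false) ν₁ false := by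
      funext μ
      simp only [update_apply]
      split_ifs <;> simp_all
    rw [hφ']
    exact hadd.trans hrem
  · have hrem := equivPM_remove_pair h₁ hν hν₁
    have hadd := equivPM_add_pair (φ := update (update φ ν false) ν₁ false) h₂
      (by simp) (by simp [h₂ν, h₂₁, hν₂])
    have hφ' : update (update φ ν false) ν₂ true
        = update (update (update (update φ ν false) ν₁ false) ν₁ true) ν₂ true := by
      funext μ
      simp only [update_apply]
      split_ifs <;> simp_all
    rw [hφ']
    exact hrem.trans hadd

end Moves

theorem equivPM_remove_of_odd_card_symmDiff {k : ℕ} {φ : Finset (Fin (k + 1)) → Bool}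
    {ν μ : Finset (Fin (k + 1))} (hν : φ ν = true) (hμ : φ μ = true)
    (hodd : Odd (ν ∆ μ).card) : EquivPM k φ (update (update φ ν false) μ false) := by
  induction hd : (ν ∆ μ).card using Nat.strong_induction_on generalizing φ ν with
  | _ d ih =>
  obtain ⟨l, hl⟩ : (ν ∆ μ).Nonempty := Finset.card_pos.mp (hd ▸ hodd.pos)
  by_cases hμ₁ : flipV ν l = μ
  · exact equivPM_remove_pair hμ₁ hν hμ
  obtain ⟨l', hν₂ν, hd₂⟩ := exists_flipV_flipV_ne_card_symmDiff_add_two hl hμ₁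
  rw [hd] at hd₂
  obtain ⟨ν₁, h₁⟩ : ∃ ν₁, flipV ν l = ν₁ := ⟨_, rfl⟩
  obtain ⟨ν₂, h₂⟩ : ∃ ν₂, flipV ν₁ l' = ν₂ := ⟨_, rfl⟩
  rw [h₁, h₂] at hν₂ν hd₂
  have hodd₂ : Odd (ν₂ ∆ μ).card := by
    obtain ⟨m, hm⟩ := hodd
    exact ⟨m - 1, by omega⟩
  have hν₂μ : ν₂ ≠ μ := by
    rintro rfl
    simp at hodd₂
  have hνμ : ν ≠ μ := by
    rintro rfl
    simp at hodd
  -- Either `ν` moves onto the free `ν₂`, two flips closer to `μ`, or `ν₂` is first removed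
  -- together with `μ` and `ν` then moves onto it.
  cases hφν₂ : φ ν₂
  · have hmove := equivPM_move h₁ h₂ hν₂ν hν hφν₂
    have hrem := ih _ (by omega) (φ := update (update φ ν false) ν₂ true) (by simp)
      (by simp [hμ, hνμ.symm, hν₂μ.symm]) hodd₂ rfl
    have hφ' : update (update φ ν false) μ false
        = update (update (update (update φ ν false) ν₂ true) ν₂ false) μ false := by
      funext ρ
      simp only [update_apply]
      split_ifs <;> simp_all
    rw [hφ']
    exact hmove.trans hrem
  · have hrem := ih _ (by omega) hφν₂ hμ hodd₂ rfl
    have hmove := equivPM_move (φ := update (update φ ν₂ false) μ false) h₁ h₂ hν₂ν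
      (by simp [hν, hνμ, hν₂ν.symm]) (by simp [hν₂μ])
    have hφ' : update (update φ ν false) μ false
        = update (update (update (update φ ν₂ false) μ false) ν false) ν₂ true := by
      funext ρ
      simp only [update_apply]
      split_ifs <;> simp_all
    rw [hφ']
    exact hrem.trans hmove

section Euler

variable {k : ℕ} {φ φ' : Finset (Fin (k + 1)) → Bool}

theorem mem_satSet {ν : Finset (Fin (k + 1))} : ν ∈ satSet φ ↔ φ ν = true := by
  simp [satSet]

theorem eul_eq_of_stepPlus (h : StepPlus k φ φ') : eul φ' = eul φ := by
  obtain ⟨ν, l, hν, hl, hφ'⟩ := h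
  have hsat : satSet φ' = insert ν (insert (flipV ν l) (satSet φ)) := by
    ext μ
    simp only [mem_satSet, hφ', Finset.mem_insert]
    tauto
  have hν' : ν ∉ insert (flipV ν l) (satSet φ) := by
    simp [mem_satSet, hν, (flipV_ne ν l).symm]
  have hl' : flipV ν l ∉ satSet φ := by simp [mem_satSet, hl]
  rw [eul, hsat, Finset.sum_insert hν', Finset.sum_insert hl', neg_one_pow_card_flipV, eul]
  ring

theorem eul_eq_of_equivPM (h : EquivPM k φ φ') : eul φ' = eul φ := by
  induction h with
  | refl => rfl
  | tail _ hstep ih =>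
    rcases hstep with hplus | hminus
    · rw [eul_eq_of_stepPlus hplus, ih]
    · rw [← eul_eq_of_stepPlus hminus, ih]

theorem exists_neg_one_pow_card_ne_of_eul_eq_zero (h : eul φ = 0) {ν : Finset (Fin (k + 1))}
    (hν : ν ∈ satSet φ) : ∃ μ ∈ satSet φ, (-1 : ℤ) ^ μ.card ≠ (-1) ^ ν.card := by
  by_contra! hsign
  have : eul φ = (satSet φ).card * (-1) ^ ν.card := by
    rw [eul, Finset.sum_congr rfl hsign, Finset.sum_const, nsmul_eq_mul]
  have hcard : (satSet φ).card ≠ 0 := Finset.card_ne_zero_of_mem hν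
  simp_all

end Euler

theorem equivPM_bot_of_eul_eq_zero {k : ℕ} {φ : Finset (Fin (k + 1)) → Bool} (h : eul φ = 0) :
    EquivPM k φ (fun _ => false) := by
  induction hn : (satSet φ).card using Nat.strong_induction_on generalizing φ with
  | _ n ih =>
  obtain hempty | ⟨ν, hν⟩ := (satSet φ).eq_empty_or_nonempty
  · have : φ = fun _ => false := by
      funext μ
      simpa [mem_satSet] using Finset.eq_empty_iff_forall_notMem.mp hempty μ
    exact this ▸ .refl
  obtain ⟨μ, hμ, hsign⟩ := exists_neg_one_pow_card_ne_of_eul_eq_zero h hν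
  have hrem := equivPM_remove_of_odd_card_symmDiff (mem_satSet.mp hν) (mem_satSet.mp hμ)
    (Finset.odd_card_symmDiff_of_neg_one_pow_ne hsign.symm)
  have hlt : (satSet (update (update φ ν false) μ false)).card < n := by
    rw [← hn]
    refine Finset.card_lt_card ((Finset.ssubset_iff_of_subset ?_).mpr ⟨ν, hν, ?_⟩)
    · intro ρ
      simp only [mem_satSet, update_apply]
      split_ifs <;> simp
    · by_cases hνμ : ν = μ <;> simp [mem_satSet, hνμ]
  exact hrem.trans (ih _ hlt (by rw [eul_eq_of_equivPM hrem, h]) rfl)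

theorem stmt10_general (k : ℕ) (φ : Finset (Fin (k + 1)) → Bool)
    (h : eul φ = 0) : EquivPM k φ (fun _ => false) :=
  equivPM_bot_of_eul_eq_zero h

/-- if `eul(φ) = 0` then `φ ≃ ⊥`. -/
theorem stmt10 (k : ℕ) (hk : 1 ≤ k) (φ : Finset (Fin (k + 1)) → Bool)
    (h : eul φ = 0) : EquivPM k φ (fun _ => false) :=
  stmt10_general k φ h
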